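/- arXiv:0708.0522 — 4 statements merged into one kernel-verified Lean document; each statement's English description precedes it below -/
import Mathlib

section
/- Let T be an irreducible aperiodic nonnegative n×n matrix with Perron eigenvalue λ₁ and positive right eigenvector u. Then for all i, j, the limit as N → ∞ of T_{ij} (T^{N−1})_j 1 / ((T^N)_i 1) exists and equals T_{ij} u_j / (λ₁ u_i). That is, the N-step survival-conditioned one-step transition probabilities converge to the twisted kernel. -/
/-! The twisted kernel `S = λ⁻¹ D_u⁻¹ T D_u` is row stochastic because `T u = λ u`, and it is
primitive along with `T`. The row sums of `T ^ N` are `λ ^ N u_i (S ^ N u⁻¹)_i`, so the ratio in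
question is `S_ij (S ^ (N - 1) u⁻¹)_j / (S ^ N u⁻¹)_i`. By Doeblin's bound, `S ^ k` contracts the
oscillation `max - min` of a vector by a factor `θ < 1`, while `max` never increases and `min`
never decreases; hence `S ^ N u⁻¹` tends to a constant vector, whose value is positive since it
is at least `min u⁻¹`, and the ratio tends to `S_ij`. -/

open Matrix BigOperators Filter Topology Finset

section RealSequences

theorem tendsto_zero_of_antitone_of_forall_add_le_mul {d : ℕ → ℝ} (hd : Antitone d)
    (h0 : ∀ N, 0 ≤ d N) {θ : ℝ} (hθ : θ < 1) {k : ℕ} (h : ∀ N, d (N + k) ≤ θ * d N) :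
    Tendsto d atTop (𝓝 0) := by
  have hlim : Tendsto d atTop (𝓝 (⨅ N, d N)) :=
    tendsto_atTop_ciInf hd ⟨0, by rintro _ ⟨N, rfl⟩; exact h0 N⟩
  have hle : ⨅ N, d N ≤ θ * ⨅ N, d N :=
    le_of_tendsto_of_tendsto' (hlim.comp (tendsto_add_atTop_nat k)) (hlim.const_mul θ) h
  have hnonneg : 0 ≤ ⨅ N, d N := ge_of_tendsto' hlim h0
  rwa [show ⨅ N, d N = 0 by nlinarith] at hlim

theorem exists_tendsto_of_antitone_of_monotone {M m : ℕ → ℝ} (hM : Antitone M)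
    (hm : Monotone m) (hle : ∀ N, m N ≤ M N) (h : Tendsto (fun N => M N - m N) atTop (𝓝 0)) :
    ∃ L, Tendsto M atTop (𝓝 L) ∧ Tendsto m atTop (𝓝 L) := by
  have hMlim : Tendsto M atTop (𝓝 (⨅ N, M N)) :=
    tendsto_atTop_ciInf hM ⟨m 0, by rintro _ ⟨N, rfl⟩; exact (hm N.zero_le).trans (hle N)⟩
  refine ⟨_, hMlim, ?_⟩
  simpa using hMlim.sub h

end RealSequences

namespace Matrix

variable {n : Type*} [Fintype n] [DecidableEq n] [Nonempty n] {P : Matrix n n ℝ}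

theorem inf'_le_mulVec_of_mem_rowStochastic (hP : P ∈ rowStochastic ℝ n) (v : n → ℝ) (i : n) :
    univ.inf' univ_nonempty v ≤ (P *ᵥ v) i :=
  calc univ.inf' univ_nonempty v = ∑ j, P i j * univ.inf' univ_nonempty v := by
        rw [← sum_mul, sum_row_of_mem_rowStochastic hP, one_mul]
    _ ≤ ∑ j, P i j * v j := sum_le_sum fun j _ =>
        mul_le_mul_of_nonneg_left (inf'_le v (mem_univ j)) (nonneg_of_mem_rowStochastic hP)

theorem mulVec_le_sup'_of_mem_rowStochastic (hP : P ∈ rowStochastic ℝ n) (v : n → ℝ) (i : n) :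
    (P *ᵥ v) i ≤ univ.sup' univ_nonempty v :=
  calc (P *ᵥ v) i = ∑ j, P i j * v j := rfl
    _ ≤ ∑ j, P i j * univ.sup' univ_nonempty v := sum_le_sum fun j _ =>
        mul_le_mul_of_nonneg_left (le_sup' v (mem_univ j)) (nonneg_of_mem_rowStochastic hP)
    _ = univ.sup' univ_nonempty v := by
        rw [← sum_mul, sum_row_of_mem_rowStochastic hP, one_mul]

/-- Doeblin's bound: the mass `∑ j, min (P a j) (P b j)` shared by rows `a` and `b` cancels in
the difference. -/
theorem mulVec_sub_mulVec_le_of_mem_rowStochastic (hP : P ∈ rowStochastic ℝ n) (v : n → ℝ)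
    (a b : n) : (P *ᵥ v) a - (P *ᵥ v) b ≤
      (1 - ∑ j, min (P a j) (P b j)) * (univ.sup' univ_nonempty v - univ.inf' univ_nonempty v) := by
  set q : n → ℝ := fun j => min (P a j) (P b j)
  have hmass (c : n) : ∑ j, (P c j - q j) = 1 - ∑ j, q j := by
    rw [sum_sub_distrib, sum_row_of_mem_rowStochastic hP]
  have hupper : ∑ j, (P a j - q j) * v j ≤ (1 - ∑ j, q j) * univ.sup' univ_nonempty v :=
    calc ∑ j, (P a j - q j) * v j ≤ ∑ j, (P a j - q j) * univ.sup' univ_nonempty v :=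
          sum_le_sum fun j _ => mul_le_mul_of_nonneg_left (le_sup' v (mem_univ j))
            (sub_nonneg.2 (min_le_left _ _))
      _ = _ := by rw [← sum_mul, hmass]
  have hlower : (1 - ∑ j, q j) * univ.inf' univ_nonempty v ≤ ∑ j, (P b j - q j) * v j :=
    calc (1 - ∑ j, q j) * univ.inf' univ_nonempty v
          = ∑ j, (P b j - q j) * univ.inf' univ_nonempty v := by rw [← sum_mul, hmass]
      _ ≤ _ := sum_le_sum fun j _ => mul_le_mul_of_nonneg_left (inf'_le v (mem_univ j))
            (sub_nonneg.2 (min_le_right _ _))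
  have hdiff : (P *ᵥ v) a - (P *ᵥ v) b =
      ∑ j, (P a j - q j) * v j - ∑ j, (P b j - q j) * v j := by
    simp only [mulVec, dotProduct, ← sum_sub_distrib]
    exact sum_congr rfl fun j _ => by ring
  rw [hdiff, mul_sub]
  linarith

theorem exists_lt_one_mulVec_sub_mulVec_le (hP : P ∈ rowStochastic ℝ n)
    (hpos : ∀ i j, 0 < P i j) : ∃ θ < 1, ∀ v : n → ℝ, ∀ a b,
      (P *ᵥ v) a - (P *ᵥ v) b ≤ θ * (univ.sup' univ_nonempty v - univ.inf' univ_nonempty v) := by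
  set δ : n × n → ℝ := fun p => 1 - ∑ j, min (P p.1 j) (P p.2 j)
  refine ⟨univ.sup' univ_nonempty δ, ?_, fun v a b => ?_⟩
  · refine (sup'_lt_iff _).2 fun p _ => sub_lt_self _ ?_
    exact sum_pos (fun j _ => lt_min (hpos _ _) (hpos _ _)) univ_nonempty
  · refine (mulVec_sub_mulVec_le_of_mem_rowStochastic hP v a b).trans ?_
    refine mul_le_mul_of_nonneg_right (le_sup' δ (mem_univ (a, b))) ?_
    exact sub_nonneg.2 ((inf'_le v (mem_univ a)).trans (le_sup' v (mem_univ a)))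

theorem exists_tendsto_pow_mulVec_of_mem_rowStochastic (hP : P ∈ rowStochastic ℝ n)
    (hprim : ∃ k, ∀ i j, 0 < (P ^ k) i j) (v : n → ℝ) :
    ∃ L, ∀ i, Tendsto (fun N => (P ^ N *ᵥ v) i) atTop (𝓝 L) := by
  obtain ⟨k, hk⟩ := hprim
  obtain ⟨θ, hθ, hcontr⟩ := exists_lt_one_mulVec_sub_mulVec_le (pow_mem hP k) hk
  set x : ℕ → n → ℝ := fun N => P ^ N *ᵥ v
  set M : ℕ → ℝ := fun N => univ.sup' univ_nonempty (x N)
  set m : ℕ → ℝ := fun N => univ.inf' univ_nonempty (x N)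
  have hx_add (N j : ℕ) : x (N + j) = P ^ j *ᵥ x N := by
    simp only [x, add_comm N, pow_add, mulVec_mulVec]
  have hM : Antitone M := antitone_nat_of_succ_le fun N => sup'_le _ _ fun i _ => by
    simpa only [hx_add, pow_one] using mulVec_le_sup'_of_mem_rowStochastic hP (x N) i
  have hm : Monotone m := monotone_nat_of_le_succ fun N => le_inf' _ _ fun i _ => by
    simpa only [hx_add, pow_one] using inf'_le_mulVec_of_mem_rowStochastic hP (x N) i
  have hle (N : ℕ) : m N ≤ M N :=
    (inf'_le _ (mem_univ (Classical.arbitrary n))).trans (le_sup' _ (mem_univ _))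
  have hosc (N : ℕ) : M (N + k) - m (N + k) ≤ θ * (M N - m N) := by
    obtain ⟨a, -, ha⟩ := exists_mem_eq_sup' univ_nonempty (x (N + k))
    obtain ⟨b, -, hb⟩ := exists_mem_eq_inf' univ_nonempty (x (N + k))
    simp only [M, m, ha, hb, hx_add]
    exact hcontr (x N) a b
  have hosc_lim : Tendsto (fun N => M N - m N) atTop (𝓝 0) :=
    tendsto_zero_of_antitone_of_forall_add_le_mul (fun _ _ h => sub_le_sub (hM h) (hm h))
      (fun N => sub_nonneg.2 (hle N)) hθ hosc
  obtain ⟨L, hML, hmL⟩ := exists_tendsto_of_antitone_of_monotone hM hm hle hosc_lim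
  exact ⟨L, fun i => tendsto_of_tendsto_of_tendsto_of_le_of_le hmL hML
    (fun N => inf'_le _ (mem_univ i)) (fun N => le_sup' _ (mem_univ i))⟩

end Matrix

section TwistedKernel

variable {n : Type*}

noncomputable def twistedKernel (T : Matrix n n ℝ) (lam : ℝ) (u : n → ℝ) : Matrix n n ℝ :=
  of fun i j => T i j * u j / (lam * u i)

theorem twistedKernel_apply (T : Matrix n n ℝ) (lam : ℝ) (u : n → ℝ) (i j : n) :
    twistedKernel T lam u i j = T i j * u j / (lam * u i) := rfl

variable [Fintype n] [DecidableEq n]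

theorem twistedKernel_mem_rowStochastic {T : Matrix n n ℝ} (hnonneg : ∀ i j, 0 ≤ T i j)
    {lam : ℝ} (hlam : 0 < lam) {u : n → ℝ} (hu : ∀ i, 0 < u i) (hru : T *ᵥ u = lam • u) :
    twistedKernel T lam u ∈ rowStochastic ℝ n := by
  refine mem_rowStochastic_iff_sum.2 ⟨fun i j => ?_, fun i => ?_⟩
  · exact div_nonneg (mul_nonneg (hnonneg i j) (hu j).le) (mul_pos hlam (hu i)).le
  · simp only [twistedKernel_apply, ← sum_div]
    rw [div_eq_one_iff_eq (mul_pos hlam (hu i)).ne']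
    simpa [mulVec, dotProduct] using congrFun hru i

theorem twistedKernel_pow (T : Matrix n n ℝ) {lam : ℝ} (hlam : lam ≠ 0) {u : n → ℝ}
    (hu : ∀ i, u i ≠ 0) (N : ℕ) :
    twistedKernel T lam u ^ N = twistedKernel (T ^ N) (lam ^ N) u := by
  induction N with
  | zero =>
    ext i j
    by_cases h : i = j <;> simp [twistedKernel_apply, one_apply, h, hu]
  | succ N ih =>
    ext i j
    simp only [pow_succ, mul_apply, ih, twistedKernel_apply, sum_div, sum_mul]
    refine sum_congr rfl fun l _ => ?_
    field_simp [hu l, hu i]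

theorem rowSum_pow_eq_mul_twistedKernel_pow_mulVec (T : Matrix n n ℝ) {lam : ℝ} (hlam : lam ≠ 0)
    {u : n → ℝ} (hu : ∀ i, u i ≠ 0) (N : ℕ) (i : n) :
    ∑ l, (T ^ N) i l = lam ^ N * u i * (twistedKernel T lam u ^ N *ᵥ u⁻¹) i := by
  simp only [twistedKernel_pow T hlam hu, mulVec, dotProduct, twistedKernel_apply, Pi.inv_apply,
    mul_sum]
  refine sum_congr rfl fun l _ => ?_
  field_simp [hu l, hu i, pow_ne_zero N hlam]

end TwistedKernel

/-- The `N`-step survival-conditioned one-step transition probabilities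
`T_{ij}(T^{N-1})_j 1 / ((T^N)_i 1)` converge to the twisted kernel
`Ť_{ij} = T_{ij} u_j / (λ₁ u_i)` as `N → ∞`. -/
theorem stmt8 {n : Type*} [Fintype n] [DecidableEq n] (T : Matrix n n ℝ)
    (hnonneg : ∀ i j, 0 ≤ T i j)
    (hprim : ∃ k, 0 < k ∧ ∀ i j, 0 < (T ^ k) i j)
    (lam : ℝ) (hlam : 0 < lam)
    (u : n → ℝ) (hu : ∀ i, 0 < u i)
    (hru : T *ᵥ u = lam • u) :
    ∀ i j, Tendsto
      (fun N : ℕ => T i j * (∑ l, (T ^ (N - 1)) j l) / (∑ l, (T ^ N) i l))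
      atTop (𝓝 (T i j * u j / (lam * u i))) := by
  intro i j
  have : Nonempty n := ⟨i⟩
  have hu0 (l : n) : u l ≠ 0 := (hu l).ne'
  set S := twistedKernel T lam u
  have hS : S ∈ rowStochastic ℝ n := twistedKernel_mem_rowStochastic hnonneg hlam hu hru
  obtain ⟨k, -, hk⟩ := hprim
  have hSk (a b : n) : 0 < (S ^ k) a b := by
    rw [twistedKernel_pow T hlam.ne' hu0, twistedKernel_apply]
    exact div_pos (mul_pos (hk a b) (hu b)) (mul_pos (pow_pos hlam k) (hu a))
  obtain ⟨L, hL⟩ := exists_tendsto_pow_mulVec_of_mem_rowStochastic hS ⟨k, hSk⟩ u⁻¹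
  have hLpos : 0 < L := by
    have hinf : 0 < univ.inf' univ_nonempty u⁻¹ := (lt_inf'_iff _).2 fun l _ => inv_pos.2 (hu l)
    refine hinf.trans_le ?_
    exact ge_of_tendsto' (hL i) fun N => inf'_le_mulVec_of_mem_rowStochastic (pow_mem hS N) _ i
  refine (tendsto_add_atTop_iff_nat 1).1 ?_
  have hlim := ((hL j).div ((hL i).comp (tendsto_add_atTop_nat 1)) hLpos.ne').const_mul (S i j)
  rw [div_self hLpos.ne', mul_one] at hlim
  refine hlim.congr fun N => ?_
  simp only [S, Pi.div_apply, Function.comp_apply, Nat.add_sub_cancel,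
    rowSum_pow_eq_mul_twistedKernel_pow_mulVec T hlam.ne' hu0, twistedKernel_apply]
  rw [pow_succ lam N]
  field_simp
end

section
/- Let T̄ be an irreducible stochastic n×n matrix with stationary distribution π̄ and deviation matrix H, and let D be an n×n matrix with π̄ D 1 ≠ 0. Define X_{−1} = (1/(π̄ D 1)) 1 π̄ and X₀ = (I − X_{−1} D) H (I − D X_{−1}). Then these matrices satisfy (I − T̄) X_{−1} = 0, (I − T̄) X₀ + D X_{−1} = I, and π̄ D X₀ = 0. -/
open Matrix BigOperators

/-- Powers of a nonnegative row-stochastic matrix are nonnegative and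
row-stochastic. -/
lemma stmt10_pow_stoch {n : Type*} [Fintype n] [DecidableEq n] (T : Matrix n n ℝ)
    (hnonneg : ∀ i j, 0 ≤ T i j) (hstoch : ∀ i, ∑ j, T i j = 1) (k : ℕ) :
    (∀ i j, 0 ≤ (T ^ k) i j) ∧ (∀ i, ∑ j, (T ^ k) i j = 1) := by
  induction k with
  | zero =>
      constructor
      · intro i j; simp [Matrix.one_apply]; split <;> norm_num
      · intro i; simp [Matrix.one_apply]
  | succ k ih =>
      rw [pow_succ]
      refine ⟨fun i j => ?_, fun i => ?_⟩
      · rw [Matrix.mul_apply]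
        exact Finset.sum_nonneg fun m _ => mul_nonneg (ih.1 i m) (hnonneg m j)
      · simp only [Matrix.mul_apply]
        rw [Finset.sum_comm]
        calc ∑ m, ∑ j, (T ^ k) i m * T m j
            = ∑ m, (T ^ k) i m * ∑ j, T m j := by simp [Finset.mul_sum]
          _ = 1 := by simp [hstoch, ih.2 i]

/-- For an irreducible stochastic matrix, harmonic vectors are constant. -/
lemma stmt10_harmonic_const {n : Type*} [Fintype n] [DecidableEq n] [Nonempty n]
    (Tbar : Matrix n n ℝ)
    (hnonneg : ∀ i j, 0 ≤ Tbar i j)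
    (hstoch : ∀ i, ∑ j, Tbar i j = 1)
    (hirr : ∀ i j, ∃ k, 0 < k ∧ 0 < (Tbar ^ k) i j)
    (v : n → ℝ) (hv : Tbar *ᵥ v = v) : ∃ c, ∀ j, v j = c := by
  obtain ⟨i, -, hi⟩ := Finset.exists_max_image Finset.univ v
    ⟨Classical.arbitrary n, Finset.mem_univ _⟩
  refine ⟨v i, fun j => ?_⟩
  obtain ⟨k, -, hkpos⟩ := hirr i j
  have hvk : ∀ k : ℕ, (Tbar ^ k) *ᵥ v = v := by
    intro k
    induction k with
    | zero => simp
    | succ k ih => rw [pow_succ, ← Matrix.mulVec_mulVec, hv, ih]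
  obtain ⟨hk0, hk1⟩ := stmt10_pow_stoch Tbar hnonneg hstoch k
  have hsum : ∑ m, (Tbar ^ k) i m * (v i - v m) = 0 := by
    have h1 : ∑ m, (Tbar ^ k) i m * v m = v i := by
      have := congrFun (hvk k) i
      simpa [Matrix.mulVec, dotProduct] using this
    have h2 : ∑ m, (Tbar ^ k) i m * v i = v i := by
      rw [← Finset.sum_mul, hk1 i, one_mul]
    simp only [mul_sub, Finset.sum_sub_distrib, h1, h2, sub_self]
  have hterm := (Finset.sum_eq_zero_iff_of_nonneg
      (fun m _ => mul_nonneg (hk0 i m) (by linarith [hi m (Finset.mem_univ m)]))).mp hsum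
  have hj := hterm j (Finset.mem_univ j)
  have hne := ne_of_gt hkpos
  have : v i - v j = 0 := by
    rcases mul_eq_zero.mp hj with h | h
    · exact absurd h hne
    · exact h
  linarith

/-- The Laurent coefficients `X₋₁ = (1/(π̄D1)) 1π̄` and
`X₀ = (I - X₋₁D)H(I - DX₋₁)` satisfy the fundamental equations
`(I - T̄)X₋₁ = 0`, `(I - T̄)X₀ + DX₋₁ = I`, and `π̄ D X₀ = 0`. -/
theorem stmt10 {n : Type*} [Fintype n] [DecidableEq n] (Tbar : Matrix n n ℝ)
    (hnonneg : ∀ i j, 0 ≤ Tbar i j)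
    (hstoch : ∀ i, ∑ j, Tbar i j = 1)
    (hirr : ∀ i j, ∃ k, 0 < k ∧ 0 < (Tbar ^ k) i j)
    (pibar : n → ℝ)
    (hstat : pibar ᵥ* Tbar = pibar)
    (hnorm : ∑ i, pibar i = 1)
    (H : Matrix n n ℝ)
    (hH : H = (1 - Tbar + Matrix.of (fun _ j => pibar j))⁻¹
        - Matrix.of (fun _ j => pibar j))
    (D : Matrix n n ℝ)
    (hD : ∑ i, (pibar ᵥ* D) i ≠ 0)
    (Xm1 X0 : Matrix n n ℝ)
    (hXm1 : Xm1 = (1 / ∑ i, (pibar ᵥ* D) i) • Matrix.of (fun _ j => pibar j))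
    (hX0 : X0 = (1 - Xm1 * D) * H * (1 - D * Xm1)) :
    (1 - Tbar) * Xm1 = 0 ∧
      (1 - Tbar) * X0 + D * Xm1 = 1 ∧
      pibar ᵥ* (D * X0) = 0 := by
  classical
  have hne : Nonempty n := by
    rcases isEmpty_or_nonempty n with h | h
    · exact absurd (by simp) hD
    · exact h
  set J : Matrix n n ℝ := Matrix.of (fun _ j => pibar j) with hJdef
  set s : ℝ := ∑ i, (pibar ᵥ* D) i with hsdef
  -- basic identities
  have hTJ : Tbar * J = J := by
    ext i j
    simp [hJdef, Matrix.mul_apply, ← Finset.sum_mul, hstoch i]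
  have hJT : J * Tbar = J := by
    ext i j
    have := congrFun hstat j
    simpa [hJdef, Matrix.mul_apply, Matrix.vecMul, dotProduct] using this
  have hJJ : J * J = J := by
    ext i j
    simp [hJdef, Matrix.mul_apply, ← Finset.sum_mul, hnorm]
  have hJDJ : J * D * J = s • J := by
    ext i j
    simp only [Matrix.smul_apply, hJdef, Matrix.of_apply, smul_eq_mul, hsdef,
      Matrix.mul_apply, Matrix.vecMul, dotProduct]
    rw [Finset.sum_mul]
  have hpDJ : pibar ᵥ* (D * J) = s • pibar := by
    funext j
    simp only [Matrix.vecMul, dotProduct, Matrix.mul_apply, hJdef,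
      Matrix.of_apply, Pi.smul_apply, smul_eq_mul, hsdef]
    simp only [Finset.mul_sum, Finset.sum_mul]
    rw [Finset.sum_comm]
    exact Finset.sum_congr rfl fun y _ => Finset.sum_congr rfl fun x _ => by ring
  have hcs : (1 / s) * s = 1 := one_div_mul_cancel hD
  -- part 1
  have h1 : (1 - Tbar) * Xm1 = 0 := by
    rw [hXm1, Matrix.mul_smul, sub_mul, one_mul, hTJ, sub_self, smul_zero]
  -- invertibility of M = 1 - Tbar + J
  set M : Matrix n n ℝ := 1 - Tbar + J with hMdef
  have hpM : pibar ᵥ* M = pibar := by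
    have hpJ : pibar ᵥ* J = pibar := by
      funext j
      simp [hJdef, Matrix.vecMul, dotProduct, ← Finset.sum_mul, hnorm]
    rw [hMdef, Matrix.vecMul_add, Matrix.vecMul_sub, Matrix.vecMul_one, hstat, hpJ]
    simp
  have hMunit : IsUnit M.det := by
    by_contra hdet
    obtain ⟨v, hv0, hMv⟩ := (Matrix.exists_mulVec_eq_zero_iff).mpr
      (by simpa using hdet)
    have hpv : pibar ⬝ᵥ v = 0 := by
      have := congrArg (fun w => pibar ⬝ᵥ w) hMv
      simpa [Matrix.dotProduct_mulVec, hpM] using this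
    have hJv : J *ᵥ v = 0 := by
      funext i
      simpa [hJdef, Matrix.mulVec, dotProduct] using hpv
    have hTv : Tbar *ᵥ v = v := by
      have : (1 - Tbar + J) *ᵥ v = 0 := hMv
      rw [Matrix.add_mulVec, Matrix.sub_mulVec, Matrix.one_mulVec, hJv] at this
      have := congrArg (fun w => w + Tbar *ᵥ v) this
      simpa using this.symm
    obtain ⟨c, hc⟩ := stmt10_harmonic_const Tbar hnonneg hstoch hirr v hTv
    have hc0 : c = 0 := by
      have : pibar ⬝ᵥ v = c := by
        simp only [dotProduct]
        calc ∑ i, pibar i * v i = ∑ i, pibar i * c := by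
              exact Finset.sum_congr rfl fun i _ => by rw [hc i]
          _ = c := by rw [← Finset.sum_mul, hnorm, one_mul]
      rw [hpv] at this; exact this.symm
    exact hv0 (funext fun j => by simp [hc j, hc0])
  have hMinv : M * M⁻¹ = 1 := Matrix.mul_nonsing_inv M hMunit
  have hJM : J * M = J := by
    rw [hMdef, mul_add, mul_sub, mul_one, hJT, hJJ]
    simp
  have hJMi : J * M⁻¹ = J := by
    calc J * M⁻¹ = (J * M) * M⁻¹ := by rw [hJM]
      _ = J * (M * M⁻¹) := by rw [mul_assoc]
      _ = J := by rw [hMinv, mul_one]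
  have hTJ0 : (1 - Tbar) * J = 0 := by
    rw [sub_mul, one_mul, hTJ, sub_self]
  have hTH : (1 - Tbar) * H = 1 - J := by
    have hMJ : (1 : Matrix n n ℝ) - Tbar = M - J := by rw [hMdef]; abel
    rw [hH, mul_sub, hTJ0, sub_zero, hMJ, sub_mul, hMinv, hJMi]
  -- part 2
  have hJDX : J * (D * Xm1) = J := by
    rw [hXm1, Matrix.mul_smul, Matrix.mul_smul, ← mul_assoc, hJDJ, smul_smul, hcs,
      one_smul]
  have h2 : (1 - Tbar) * X0 + D * Xm1 = 1 := by
    have e1 : (1 - Tbar) * X0 = 1 - D * Xm1 := by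
      calc (1 - Tbar) * X0
          = ((1 - Tbar) * (1 - Xm1 * D)) * (H * (1 - D * Xm1)) := by
            rw [hX0]; noncomm_ring
        _ = (1 - Tbar) * (H * (1 - D * Xm1)) := by
            have e0 : (1 - Tbar) * (1 - Xm1 * D) = 1 - Tbar := by
              rw [mul_sub, mul_one, ← mul_assoc, h1, zero_mul, sub_zero]
            rw [e0]
        _ = ((1 - Tbar) * H) * (1 - D * Xm1) := by rw [mul_assoc]
        _ = (1 - J) * (1 - D * Xm1) := by rw [hTH]
        _ = 1 - D * Xm1 - J + J * (D * Xm1) := by noncomm_ring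
        _ = 1 - D * Xm1 := by rw [hJDX]; abel
    rw [e1]; abel
  -- part 3
  have hvs : ∀ (b : ℝ) (A : Matrix n n ℝ), pibar ᵥ* (b • A) = b • (pibar ᵥ* A) := by
    intro b A
    funext j
    simp [Matrix.vecMul, dotProduct, Finset.mul_sum, mul_comm, mul_left_comm]
  have hpDXm1 : pibar ᵥ* (D * Xm1) = pibar := by
    rw [hXm1, Matrix.mul_smul, hvs, hpDJ, smul_smul, hcs, one_smul]
  have h3 : pibar ᵥ* (D * X0) = 0 := by
    have e2 : D * X0 = (D * (1 - Xm1 * D)) * (H * (1 - D * Xm1)) := by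
      rw [hX0]; noncomm_ring
    have e3 : pibar ᵥ* (D * (1 - Xm1 * D)) = 0 := by
      have : D * (1 - Xm1 * D) = D - (D * Xm1) * D := by noncomm_ring
      rw [this, Matrix.vecMul_sub, ← Matrix.vecMul_vecMul, hpDXm1, sub_self]
    rw [e2, ← Matrix.vecMul_vecMul, e3, Matrix.zero_vecMul]
  exact ⟨h1, h2, h3⟩
end

section
/- Let T̄ be an irreducible stochastic n×n matrix with stationary distribution π̄ and let D be an n×n matrix with π̄ D 1 ≠ 0 such that T(ε) = T̄ − εD is substochastic with spectral radius < 1 for all small ε > 0. Then ε · [I − T(ε)]^{-1} converges as ε → 0⁺ to X_{−1} = (1/(π̄ D 1)) 1 π̄. -/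
/-!
Put `B = 1 - T̄`, so `1 - T(ε) = B + εD`, `π̄ B = 0` and `B 1 = 0`. Multiplying
`(B + εD) adj(B + εD) = det(B + εD) • 1` on the left by `π̄` and summing the entries gives
`det(B + εD) = ε φ(ε)` with `φ(ε) = π̄ D adj(B + εD) 1` continuous, so that
`ε (B + εD)⁻¹ = adj(B + εD) / φ(ε) → adj B / φ(0)`. By the maximum principle the kernel of `B`
consists of the constant vectors, hence `B + 1π̄` is invertible, and the factorization
`B = (B + 1π̄)(1 - 1π̄)` gives `adj B = det(B + 1π̄) • 1π̄`, so that
`φ(0) = det(B + 1π̄) · π̄D1 ≠ 0` and the limit is `1π̄ / π̄D1`.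
-/

open Matrix BigOperators Filter Topology

namespace Matrix

variable {n : Type*} [Fintype n]

section RankOne

variable {R : Type*} [CommRing R]

theorem vecMul_replicateRow (v p : n → R) : v ᵥ* replicateRow n p = (∑ i, v i) • p := by
  ext j
  simp [vecMul, dotProduct, replicateRow_apply, Finset.sum_mul]

theorem mul_replicateRow_eq_zero {B : Matrix n n R} (hB : ∀ i, ∑ j, B i j = 0) (p : n → R) :
    B * replicateRow n p = 0 := by
  ext i j
  simp [mul_apply, replicateRow_apply, ← Finset.sum_mul, hB]

theorem replicateRow_mul_self {p : n → R} (hp : ∑ i, p i = 1) :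
    replicateRow n p * replicateRow n p = replicateRow n p := by
  ext i j
  simp [mul_apply, replicateRow_apply, ← Finset.sum_mul, hp]

theorem vecMul_add_replicateRow_self {B : Matrix n n R} {p : n → R} (hp : ∑ i, p i = 1)
    (hpB : p ᵥ* B = 0) : p ᵥ* (B + replicateRow n p) = p := by
  rw [vecMul_add, hpB, vecMul_replicateRow, hp, one_smul, zero_add]

variable [DecidableEq n]

theorem det_one_add_smul_replicateRow {p : n → R} (hp : ∑ i, p i = 1) (a : R) :
    det (1 + a • replicateRow n p) = 1 + a := by
  have : a • replicateRow n p = replicateCol Unit (fun _ => a) * replicateRow Unit p := by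
    ext i j
    simp [mul_apply, replicateRow_apply]
  rw [this, det_one_add_replicateCol_mul_replicateRow]
  simp [dotProduct, ← Finset.sum_mul, hp]

theorem eq_adjugate_of_mul_eq_det_smul {A X : Matrix n n R} (hdet : IsLeftRegular A.det)
    (hX : A * X = A.det • 1) : X = adjugate A := by
  have h := congrArg (adjugate A * ·) hX
  simp only [← Matrix.mul_assoc, adjugate_mul, Matrix.smul_mul, Matrix.mul_smul, Matrix.one_mul,
    Matrix.mul_one] at h
  ext i j
  exact hdet (by simpa only [smul_apply, smul_eq_mul] using congrFun (congrFun h i) j)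

theorem adjugate_one_add_smul_replicateRow_of_isLeftRegular {p : n → R} (hp : ∑ i, p i = 1)
    {a : R} (ha : IsLeftRegular (1 + a)) :
    adjugate (1 + a • replicateRow n p) = (1 + a) • 1 - a • replicateRow n p := by
  rw [← det_one_add_smul_replicateRow hp] at ha
  refine (eq_adjugate_of_mul_eq_det_smul ha ?_).symm
  simp only [det_one_add_smul_replicateRow hp, Matrix.add_mul, Matrix.mul_sub, Matrix.one_mul,
    Matrix.mul_smul, Matrix.smul_mul, Matrix.mul_one, replicateRow_mul_self hp]
  module

open Polynomial in
/-- The identity holds over `R[X]` at `a = X`, where the determinant `1 + X` is regular;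
specialize along `X ↦ a`. -/
theorem adjugate_one_add_smul_replicateRow {p : n → R} (hp : ∑ i, p i = 1) (a : R) :
    adjugate (1 + a • replicateRow n p) = (1 + a) • 1 - a • replicateRow n p := by
  have hX : IsLeftRegular (1 + X : R[X]) := by
    simpa [add_comm] using (monic_X_add_C (1 : R)).isRegular.left
  have h := congrArg (eval₂RingHom (RingHom.id R) a).mapMatrix
    (adjugate_one_add_smul_replicateRow_of_isLeftRegular (p := fun i => C (p i))
      (by simp [← map_sum, hp]) hX)
  rw [RingHom.map_adjugate] at h
  convert h using 2 <;> ext i j <;> by_cases hij : i = j <;>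
    simp [replicateRow_apply, hij, mul_comm a]

theorem adjugate_one_sub_replicateRow {p : n → R} (hp : ∑ i, p i = 1) :
    adjugate (1 - replicateRow n p) = replicateRow n p := by
  simpa [← sub_eq_add_neg] using adjugate_one_add_smul_replicateRow hp (-1)

theorem det_eq_sum_vecMul_adjugate {p : n → R} (hp : ∑ i, p i = 1) (A : Matrix n n R) :
    A.det = ∑ j, (p ᵥ* A ᵥ* adjugate A) j := by
  simp [vecMul_vecMul, mul_adjugate, vecMul_smul, ← Finset.mul_sum, hp]

variable {B : Matrix n n R} {p : n → R}

/-- `B = (B + 1p) (1 - 1p)`, and `p` is a left eigenvector of `B + 1p` for the eigenvalue `1`. -/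
theorem adjugate_eq_det_add_replicateRow_smul (hp : ∑ i, p i = 1) (hpB : p ᵥ* B = 0)
    (hB : ∀ i, ∑ j, B i j = 0) :
    adjugate B = det (B + replicateRow n p) • replicateRow n p := by
  set M := B + replicateRow n p
  have hfactor : M * (1 - replicateRow n p) = B := by
    rw [Matrix.mul_sub, Matrix.mul_one, Matrix.add_mul, mul_replicateRow_eq_zero hB,
      replicateRow_mul_self hp, zero_add, add_sub_cancel_right]
  have hleft : p ᵥ* adjugate M = M.det • p := by
    rw [← vecMul_add_replicateRow_self hp hpB, vecMul_vecMul, mul_adjugate, vecMul_smul,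
      vecMul_one, vecMul_add_replicateRow_self hp hpB]
  rw [← hfactor, adjugate_mul_distrib, adjugate_one_sub_replicateRow hp, ← replicateRow_vecMul,
    hleft, replicateRow_smul]

end RankOne

theorem det_add_replicateRow_ne_zero {K : Type*} [Field K] [DecidableEq n] {B : Matrix n n K}
    {p : n → K} (hp : ∑ i, p i = 1) (hpB : p ᵥ* B = 0)
    (hker : ∀ v, B *ᵥ v = 0 → ∀ i j, v i = v j) : det (B + replicateRow n p) ≠ 0 := by
  intro hdet
  obtain ⟨v, hv0, hv⟩ := exists_mulVec_eq_zero_iff.2 hdet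
  have hpv : p ⬝ᵥ v = 0 := by
    rw [← vecMul_add_replicateRow_self hp hpB, ← dotProduct_mulVec, hv, dotProduct_zero]
  have hBv : B *ᵥ v = 0 := by
    rwa [add_mulVec, replicateRow_mulVec_eq_const, hpv, Function.const_zero, add_zero] at hv
  obtain ⟨i, hi⟩ := Function.ne_iff.1 hv0
  apply hi
  calc v i = ∑ j, p j * v i := by rw [← Finset.sum_mul, hp, one_mul]
    _ = p ⬝ᵥ v := Finset.sum_congr rfl fun j _ => by rw [hker v hBv j i]
    _ = 0 := hpv

theorem tendsto_smul_inv_of_det_eq_mul {𝕜 : Type*} [NormedField 𝕜] [DecidableEq n]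
    {A : 𝕜 → Matrix n n 𝕜} {φ : 𝕜 → 𝕜} (hA : Continuous A) (hφ : ContinuousAt φ 0)
    (hφ0 : φ 0 ≠ 0) (hdet : ∀ ε, (A ε).det = ε * φ ε) :
    Tendsto (fun ε => ε • (A ε)⁻¹) (𝓝[≠] 0) (𝓝 ((φ 0)⁻¹ • adjugate (A 0))) := by
  have hlim : Tendsto (fun ε => (φ ε)⁻¹ • adjugate (A ε)) (𝓝[≠] 0)
      (𝓝 ((φ 0)⁻¹ • adjugate (A 0))) :=
    ((hφ.inv₀ hφ0).smul hA.matrix_adjugate.continuousAt).tendsto.mono_left nhdsWithin_le_nhds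
  refine hlim.congr' ?_
  filter_upwards [self_mem_nhdsWithin, nhdsWithin_le_nhds (hφ.eventually_ne hφ0)]
    with ε (hε : ε ≠ 0) hφε
  rw [inv_def, hdet, Ring.inverse_eq_inv, smul_smul, mul_inv, ← mul_assoc, mul_inv_cancel₀ hε,
    one_mul]

theorem tendsto_smul_inv_add_smul {𝕜 : Type*} [NormedField 𝕜] [DecidableEq n]
    {B D : Matrix n n 𝕜} {p : n → 𝕜} (hp : ∑ i, p i = 1) (hpB : p ᵥ* B = 0)
    (hB : ∀ i, ∑ j, B i j = 0) (hker : ∀ v, B *ᵥ v = 0 → ∀ i j, v i = v j)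
    (hD : ∑ i, (p ᵥ* D) i ≠ 0) :
    Tendsto (fun ε : 𝕜 => ε • (B + ε • D)⁻¹) (𝓝[≠] 0)
      (𝓝 ((1 / ∑ i, (p ᵥ* D) i) • replicateRow n p)) := by
  set c := ∑ i, (p ᵥ* D) i
  set φ : 𝕜 → 𝕜 := fun ε => ∑ j, ((p ᵥ* D) ᵥ* adjugate (B + ε • D)) j
  have hdet : ∀ ε, (B + ε • D).det = ε * φ ε := fun ε => by
    rw [det_eq_sum_vecMul_adjugate hp, vecMul_add, hpB, zero_add, vecMul_smul, smul_vecMul,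
      Finset.mul_sum]
    rfl
  have hadj := adjugate_eq_det_add_replicateRow_smul hp hpB hB
  have hM := det_add_replicateRow_ne_zero hp hpB hker
  have hφ0 : φ 0 = det (B + replicateRow n p) * c := by
    simp only [φ, zero_smul, add_zero, hadj, vecMul_smul, vecMul_replicateRow, Pi.smul_apply,
      smul_eq_mul, ← Finset.mul_sum, hp, mul_one, c]
  have hlim := tendsto_smul_inv_of_det_eq_mul (A := fun ε => B + ε • D)
    (by fun_prop) (by fun_prop) (hφ0 ▸ mul_ne_zero hM hD) hdet
  rwa [zero_smul, add_zero, hadj, hφ0, smul_smul, mul_inv, mul_comm _ c⁻¹, mul_assoc,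
    inv_mul_cancel₀ hM, mul_one, ← one_div] at hlim

section Stochastic

variable [DecidableEq n]

theorem pow_mulVec_eq_self {R : Type*} [Semiring R] {T : Matrix n n R} {v : n → R}
    (hv : T *ᵥ v = v) (k : ℕ) : (T ^ k) *ᵥ v = v := by
  induction k with
  | zero => simp
  | succ k ih => rw [pow_succ, ← mulVec_mulVec, hv, ih]

/-- Maximum principle: `v = Tᵏ v` averages `v`, so `v` is constant on the states reachable from
a maximum of `v`. -/
theorem eq_of_mulVec_eq_self_of_irreducible {T : Matrix n n ℝ} (hT : ∀ i j, 0 ≤ T i j)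
    (hstoch : ∀ i, ∑ j, T i j = 1) (hirr : ∀ i j, ∃ k, 0 < k ∧ 0 < (T ^ k) i j)
    {v : n → ℝ} (hv : T *ᵥ v = v) (i j : n) : v i = v j := by
  obtain ⟨m, -, hmax⟩ := Finset.exists_max_image Finset.univ v ⟨i, Finset.mem_univ i⟩
  suffices h : ∀ j, v j = v m by rw [h i, h j]
  intro j
  obtain ⟨k, -, hk⟩ := hirr m j
  have hone : T *ᵥ 1 = 1 := funext fun i => by simp [mulVec, dotProduct, hstoch]
  have hdrop : ∑ l, (T ^ k) m l * (v m - v l) = 0 := by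
    have hrow := congrFun (pow_mulVec_eq_self hone k) m
    have hval := congrFun (pow_mulVec_eq_self hv k) m
    simp only [mulVec, dotProduct, Pi.one_apply, mul_one] at hrow hval
    simp only [mul_sub, Finset.sum_sub_distrib, ← Finset.sum_mul, hrow, hval, one_mul, sub_self]
  have hterm := (Finset.sum_eq_zero_iff_of_nonneg fun l _ =>
    mul_nonneg (pow_apply_nonneg hT k m l) (sub_nonneg.2 (hmax l (Finset.mem_univ l)))).1
    hdrop j (Finset.mem_univ j)
  linarith [sub_eq_zero.1 ((mul_eq_zero.1 hterm).resolve_left hk.ne')]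

end Stochastic

end Matrix

theorem stmt11_general {n : Type*} [Fintype n] [DecidableEq n]
    (Tbar : Matrix n n ℝ)
    (hnonneg : ∀ i j, 0 ≤ Tbar i j)
    (hstoch : ∀ i, ∑ j, Tbar i j = 1)
    (hirr : ∀ i j, ∃ k, 0 < k ∧ 0 < (Tbar ^ k) i j)
    (pibar : n → ℝ)
    (hstat : pibar ᵥ* Tbar = pibar)
    (hnorm : ∑ i, pibar i = 1)
    (D : Matrix n n ℝ)
    (hD : ∑ i, (pibar ᵥ* D) i ≠ 0) :
    Tendsto (fun ε : ℝ => ε • (1 - (Tbar - ε • D))⁻¹)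
      (𝓝[>] (0 : ℝ))
      (𝓝 ((1 / ∑ i, (pibar ᵥ* D) i) • Matrix.of (fun _ j => pibar j))) := by
  set B := 1 - Tbar
  have hB : ∀ i, ∑ j, B i j = 0 := fun i => by
    simp [B, Matrix.sub_apply, Finset.sum_sub_distrib, hstoch, one_apply]
  have hpiB : pibar ᵥ* B = 0 := by rw [vecMul_sub, vecMul_one, hstat, sub_self]
  have hker : ∀ v, B *ᵥ v = 0 → ∀ i j, v i = v j := fun v hv =>
    eq_of_mulVec_eq_self_of_irreducible hnonneg hstoch hirr
      (by rwa [sub_mulVec, one_mulVec, sub_eq_zero, eq_comm] at hv)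
  refine ((tendsto_smul_inv_add_smul hnorm hpiB hB hker hD).mono_left
    (nhdsWithin_mono 0 fun (ε : ℝ) (hε : 0 < ε) => hε.ne')).congr fun ε => ?_
  simp only [B, sub_sub_eq_add_sub, add_sub_right_comm]

/-- `ε [I - (T̄ - εD)]⁻¹ → X₋₁ = (1/(π̄D1)) 1π̄` as `ε → 0⁺`. -/
theorem stmt11 {n : Type*} [Fintype n] [DecidableEq n] [Nonempty n]
    (Tbar : Matrix n n ℝ)
    (hnonneg : ∀ i j, 0 ≤ Tbar i j)
    (hstoch : ∀ i, ∑ j, Tbar i j = 1)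
    (hirr : ∀ i j, ∃ k, 0 < k ∧ 0 < (Tbar ^ k) i j)
    (pibar : n → ℝ)
    (hstat : pibar ᵥ* Tbar = pibar)
    (hnorm : ∑ i, pibar i = 1)
    (D : Matrix n n ℝ)
    (hD : ∑ i, (pibar ᵥ* D) i ≠ 0)
    (hsub : ∃ ε₀ > (0 : ℝ), ∀ ε : ℝ, 0 < ε → ε < ε₀ →
      (∀ i j, 0 ≤ (Tbar - ε • D) i j) ∧
      (∀ i, ∑ j, (Tbar - ε • D) i j ≤ 1) ∧
      (∀ μ ∈ spectrum ℂ ((Tbar - ε • D).map (Complex.ofReal ·)),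
        ‖μ‖ < 1)) :
    Tendsto (fun ε : ℝ => ε • (1 - (Tbar - ε • D))⁻¹)
      (𝓝[>] (0 : ℝ))
      (𝓝 ((1 / ∑ i, (pibar ᵥ* D) i) • Matrix.of (fun _ j => pibar j))) :=
  stmt11_general Tbar hnonneg hstoch hirr pibar hstat hnorm D hD
end

section
/- Let T̄ be an irreducible stochastic matrix with stationary distribution π̄ and deviation matrix H, and D a matrix with π̄ D 1 ≠ 0. The unique solution x (a row vector) of the system x(I − T̄) = π̄[(π̄ D 1)I − D] together with x 1 = 0 is x = −π̄ D H. -/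
open Matrix BigOperators

/-- Powers of an entrywise-nonnegative matrix are nonnegative. -/
lemma pow_nonneg_entry {n : Type*} [Fintype n] [DecidableEq n]
    (T : Matrix n n ℝ) (hnn : ∀ i j, 0 ≤ T i j) :
    ∀ k i j, 0 ≤ (T ^ k) i j := by
  intro k
  induction k with
  | zero =>
    intro i j
    simp [Matrix.one_apply]
    split <;> norm_num
  | succ m ih =>
    intro i j
    rw [pow_succ]
    simp only [Matrix.mul_apply]
    exact Finset.sum_nonneg fun l _ => mul_nonneg (ih i l) (hnn l j)

/-- Powers of a stochastic matrix are stochastic. -/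
lemma pow_stoch {n : Type*} [Fintype n] [DecidableEq n]
    (T : Matrix n n ℝ) (hst : ∀ i, ∑ j, T i j = 1) :
    ∀ k i, ∑ j, (T ^ k) i j = 1 := by
  intro k
  induction k with
  | zero => intro i; simp [Matrix.one_apply]
  | succ m ih =>
    intro i
    rw [pow_succ]
    simp only [Matrix.mul_apply]
    rw [Finset.sum_comm]
    calc ∑ l, ∑ j, (T ^ m) i l * T l j
        = ∑ l, (T ^ m) i l * ∑ j, T l j := by
          simp [Finset.mul_sum]
      _ = 1 := by simp [hst, ih i]

/-- A right eigenvector of an irreducible stochastic matrix for eigenvalue 1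
is constant. -/
lemma eig_const {n : Type*} [Fintype n] [DecidableEq n] [Nonempty n]
    (T : Matrix n n ℝ) (hnn : ∀ i j, 0 ≤ T i j) (hst : ∀ i, ∑ j, T i j = 1)
    (hirr : ∀ i j, ∃ k, 0 < k ∧ 0 < (T ^ k) i j)
    (u : n → ℝ) (hu : T *ᵥ u = u) : ∀ i j, u i = u j := by
  have hpu : ∀ k, (T ^ k) *ᵥ u = u := by
    intro k
    induction k with
    | zero => simp
    | succ m ih => rw [pow_succ', ← Matrix.mulVec_mulVec, ih, hu]
  obtain ⟨i₀, -, hmax⟩ := Finset.exists_max_image Finset.univ u Finset.univ_nonempty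
  have key : ∀ j, u j = u i₀ := by
    intro j
    obtain ⟨k, -, hpos⟩ := hirr i₀ j
    have h1 : ∑ l, (T ^ k) i₀ l * u l = u i₀ := by
      have := congrFun (hpu k) i₀
      simpa [Matrix.mulVec, dotProduct] using this
    have h2 : ∑ l, (T ^ k) i₀ l * (u i₀ - u l) = 0 := by
      have hs := pow_stoch T hst k i₀
      simp only [mul_sub]
      rw [Finset.sum_sub_distrib, ← Finset.sum_mul, hs, h1, one_mul, sub_self]
    have h3 := (Finset.sum_eq_zero_iff_of_nonneg (fun l _ =>
      mul_nonneg (pow_nonneg_entry T hnn k i₀ l)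
        (sub_nonneg.mpr (hmax l (Finset.mem_univ l))))).mp h2 j (Finset.mem_univ j)
    rcases mul_eq_zero.mp h3 with h | h
    · exact absurd h (ne_of_gt hpos)
    · linarith [sub_eq_zero.mp h]
  intro i j; rw [key i, key j]

/-- The unique row vector `x` with `x(I - T̄) = π̄[(π̄D1)I - D]` and `x1 = 0`
is `x = -π̄DH`. -/
theorem stmt15 {n : Type*} [Fintype n] [DecidableEq n]
    (Tbar : Matrix n n ℝ)
    (hnonneg : ∀ i j, 0 ≤ Tbar i j)
    (hstoch : ∀ i, ∑ j, Tbar i j = 1)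
    (hirr : ∀ i j, ∃ k, 0 < k ∧ 0 < (Tbar ^ k) i j)
    (pibar : n → ℝ)
    (hstat : pibar ᵥ* Tbar = pibar)
    (hnorm : ∑ i, pibar i = 1)
    (H : Matrix n n ℝ)
    (hH : H = (1 - Tbar + Matrix.of (fun _ j => pibar j))⁻¹
        - Matrix.of (fun _ j => pibar j))
    (D : Matrix n n ℝ)
    (hD : ∑ i, (pibar ᵥ* D) i ≠ 0) :
    ∀ x : n → ℝ,
      (x ᵥ* (1 - Tbar) = (∑ i, (pibar ᵥ* D) i) • pibar - pibar ᵥ* D ∧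
          ∑ i, x i = 0)
        ↔ x = -((pibar ᵥ* D) ᵥ* H) := by
  have hne : Nonempty n := by
    by_contra h
    rw [not_nonempty_iff] at h
    simp at hnorm
  set J : Matrix n n ℝ := Matrix.of (fun _ j => pibar j) with hJ
  set A : Matrix n n ℝ := 1 - Tbar + J with hA
  -- A has trivial kernel
  have hker : ∀ u : n → ℝ, A *ᵥ u = 0 → u = 0 := by
    intro u hu
    have hAu : ∀ i, u i - (Tbar *ᵥ u) i + (∑ j, pibar j * u j) = 0 := by
      intro i
      have h := congrFun hu i
      rw [hA, Matrix.add_mulVec, Matrix.sub_mulVec, Matrix.one_mulVec] at h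
      simp only [Pi.add_apply, Pi.sub_apply, Pi.zero_apply] at h
      have hJu : (J *ᵥ u) i = ∑ j, pibar j * u j := by
        simp [hJ, Matrix.mulVec, dotProduct]
      rw [hJu] at h
      exact h
    set c : ℝ := ∑ j, pibar j * u j with hc
    have hTu : Tbar *ᵥ u = u + fun _ => c := by
      funext i
      have := hAu i
      simp only [Pi.add_apply]
      linarith
    -- dot with pibar : c = 0
    have hdot : ∑ i, pibar i * (Tbar *ᵥ u) i = ∑ i, pibar i * u i := by
      calc ∑ i, pibar i * (Tbar *ᵥ u) i
          = ∑ i, ∑ j, pibar i * (Tbar i j * u j) := by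
            simp [Matrix.mulVec, dotProduct, Finset.mul_sum]
        _ = ∑ j, (∑ i, pibar i * Tbar i j) * u j := by
            rw [Finset.sum_comm]
            simp [Finset.sum_mul, mul_assoc]
        _ = ∑ j, pibar j * u j := by
            refine Finset.sum_congr rfl fun j _ => ?_
            have := congrFun hstat j
            simp only [Matrix.vecMul, dotProduct] at this
            rw [this]
    have hc0 : c = 0 := by
      have : ∑ i, pibar i * (u i + c) = ∑ i, pibar i * u i := by
        rw [← hdot]
        refine Finset.sum_congr rfl fun i _ => ?_
        rw [hTu]
        simp
      simp only [mul_add, Finset.sum_add_distrib, ← Finset.sum_mul, hnorm, one_mul] at this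
      linarith
    have hTu' : Tbar *ᵥ u = u := by
      rw [hTu, hc0]; funext i; simp
    have hconst := eig_const Tbar hnonneg hstoch hirr u hTu'
    -- u is constant, and c = ∑ pibar j * u j = u i0 = 0
    obtain ⟨i₀⟩ := hne
    have huc : ∀ j, u j = u i₀ := fun j => hconst j i₀
    have : c = u i₀ := by
      rw [hc]
      calc ∑ j, pibar j * u j = ∑ j, pibar j * u i₀ := by
            refine Finset.sum_congr rfl fun j _ => by rw [huc j]
        _ = u i₀ := by rw [← Finset.sum_mul, hnorm, one_mul]
    funext j
    rw [huc j, ← this, hc0]; rfl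
  have hdet : IsUnit A.det := by
    rw [isUnit_iff_ne_zero]
    intro h0
    obtain ⟨v, hv, hv0⟩ := Matrix.exists_mulVec_eq_zero_iff.mpr h0
    exact hv (hker v hv0)
  have hAinv : A * A⁻¹ = 1 := Matrix.mul_nonsing_inv A hdet
  have hinvA : A⁻¹ * A = 1 := Matrix.nonsing_inv_mul A hdet
  -- basic facts
  have hJmulvec : ∀ u : n → ℝ, J *ᵥ u = fun _ => ∑ j, pibar j * u j := by
    intro u; funext i; simp [hJ, Matrix.mulVec, dotProduct]
  have hvecmulJ : ∀ v : n → ℝ, v ᵥ* J = (∑ i, v i) • pibar := by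
    intro v; funext j
    simp [hJ, Matrix.vecMul, dotProduct, Finset.sum_mul]
  have hone : (fun (_ : n) => (1:ℝ)) = fun _ => 1 := rfl
  -- A *ᵥ 1 = 1
  have hA1 : A *ᵥ (fun _ => (1:ℝ)) = fun _ => (1:ℝ) := by
    funext i
    rw [hA, Matrix.add_mulVec, Matrix.sub_mulVec, Matrix.one_mulVec]
    have h1 : (Tbar *ᵥ fun _ => (1:ℝ)) i = 1 := by
      simp [Matrix.mulVec, dotProduct, hstoch i]
    have h2 : (J *ᵥ fun _ => (1:ℝ)) i = 1 := by
      simp [hJ, Matrix.mulVec, dotProduct, hnorm]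
    simp only [Pi.add_apply, Pi.sub_apply, h1, h2]
    norm_num
  have hAinv1 : A⁻¹ *ᵥ (fun _ => (1:ℝ)) = fun _ => (1:ℝ) := by
    have : A⁻¹ *ᵥ (A *ᵥ (fun _ => (1:ℝ))) = fun _ => (1:ℝ) := by
      rw [Matrix.mulVec_mulVec, hinvA, Matrix.one_mulVec]
    rwa [hA1] at this
  -- H *ᵥ 1 = 0
  have hH1 : H *ᵥ (fun _ => (1:ℝ)) = 0 := by
    rw [hH]
    rw [Matrix.sub_mulVec, hAinv1]
    funext i
    simp [hJ, Matrix.mulVec, dotProduct, hnorm]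
  -- J * Tbar = J, J * (1 - Tbar) = 0
  have hJT : J * Tbar = J := by
    ext i j
    simp only [Matrix.mul_apply, hJ, Matrix.of_apply]
    have := congrFun hstat j
    simpa [Matrix.vecMul, dotProduct] using this
  have hJsub : J * (1 - Tbar) = 0 := by
    rw [Matrix.mul_sub, Matrix.mul_one, hJT, sub_self]
  -- A⁻¹ * J = J
  have hAinvJ : A⁻¹ * J = J := by
    ext i j
    simp only [Matrix.mul_apply, hJ, Matrix.of_apply]
    have := congrFun hAinv1 i
    simp only [Matrix.mulVec, dotProduct, mul_one] at this
    calc ∑ k, A⁻¹ i k * pibar j = (∑ k, A⁻¹ i k) * pibar j := by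
          rw [Finset.sum_mul]
      _ = pibar j := by rw [this, one_mul]
  -- H * (1 - Tbar) = 1 - J
  have hHsub : H * (1 - Tbar) = 1 - J := by
    rw [hH]
    have h1 : (1 : Matrix n n ℝ) - Tbar = A - J := by
      rw [hA, add_sub_cancel_right]
    rw [Matrix.sub_mul, h1, Matrix.mul_sub, hinvA, hAinvJ]
    have h2 : J * (A - J) = 0 := by rw [← h1, hJsub]
    rw [h2, sub_zero]
  set c : ℝ := ∑ i, (pibar ᵥ* D) i with hc
  set w : n → ℝ := pibar ᵥ* D with hw
  -- the candidate solution
  have hsol1 : (-(w ᵥ* H)) ᵥ* (1 - Tbar) = c • pibar - w := by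
    rw [Matrix.neg_vecMul, Matrix.vecMul_vecMul, hHsub, Matrix.vecMul_sub,
      Matrix.vecMul_one, hvecmulJ]
    funext j
    simp only [Pi.neg_apply, Pi.sub_apply, Pi.smul_apply, smul_eq_mul, ← hc]
    ring
  have hsol2 : ∑ i, (-(w ᵥ* H)) i = 0 := by
    have : ∑ i, (w ᵥ* H) i = w ⬝ᵥ (H *ᵥ (fun _ => (1:ℝ))) := by
      rw [Matrix.dotProduct_mulVec]
      simp [dotProduct]
    simp only [Pi.neg_apply, Finset.sum_neg_distrib, this, hH1]
    simp [dotProduct]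
  intro x
  constructor
  · rintro ⟨hx1, hx2⟩
    set y : n → ℝ := x + w ᵥ* H with hy
    have hy1 : y ᵥ* (1 - Tbar) = 0 := by
      rw [hy, Matrix.add_vecMul, hx1]
      have := hsol1
      rw [Matrix.neg_vecMul] at this
      have h' : w ᵥ* H ᵥ* (1 - Tbar) = -(c • pibar - w) := by
        rw [← neg_eq_iff_eq_neg]; exact this
      rw [h']
      simp
    have hy2 : ∑ i, y i = 0 := by
      have : ∑ i, y i = ∑ i, x i - ∑ i, (-(w ᵥ* H)) i := by
        simp [hy, Finset.sum_add_distrib, Finset.sum_neg_distrib]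
      rw [this, hx2, hsol2, sub_zero]
    have hyA : y ᵥ* A = 0 := by
      rw [hA, Matrix.vecMul_add, hy1, hvecmulJ, hy2, zero_add, zero_smul]
    have : y = 0 := by
      have h1 : y ᵥ* A ᵥ* A⁻¹ = y := by
        rw [Matrix.vecMul_vecMul, hAinv, Matrix.vecMul_one]
      rw [hyA] at h1
      rw [← h1, Matrix.zero_vecMul]
    have := congrArg (fun z => z - w ᵥ* H) this
    simp only [hy] at this
    simpa using this
  · rintro rfl
    exact ⟨hsol1, hsol2⟩
end
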